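/- arXiv:funct-an/9602008 — 3 statements merged into one kernel-verified Lean document; each statement's English description precedes it below -/
import Mathlib

section
/- Let D be a unital C*-algebra with a unique tracial state τ, let B be a finite-dimensional *-subalgebra of D containing the unit of D, and let {P₁,…,P_N} be the set of minimal central projections of B. Then an element x ∈ D commuting with every element of B is independent of B (that is, τ(xy) = τ(x)τ(y) for all y ∈ B) if and only if τ(xP_i) = τ(x)τ(P_i) for every i = 1,…,N. -/
/-!
Since `x` commutes with `B`, both `y ↦ τ(xy)` and `y ↦ τ(x)τ(y)` are tracial functionals on `B`,
so it suffices that a tracial functional `ψ` on `B` vanishing on the minimal central projections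
is zero. The trace `t` of the left regular representation of `B` is faithful: the eigenvalues of
left multiplication by `c c⋆` lie in the spectrum of `c c⋆`, hence are nonnegative. Therefore
`ψ = t(c ·)` for some `c`, and traciality of `ψ` makes `c` central. Central elements of `B` are
normal with finite spectrum, so Lagrange interpolation on the spectrum writes them as combinations
of central projections, and every central projection is a sum of minimal ones. Hence `ψ` vanishes
at `c⋆`, i.e. `t(c c⋆) = 0`, and `c = 0`.
-/

open scoped ComplexOrder

variable {D : Type*} [CStarAlgebra D]

/-- A tracial state on a unital C*-algebra: a positive linear functional `τ` with
`τ(1) = 1` and `τ(ab) = τ(ba)`. -/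
def IsTracialState (τ : D →ₗ[ℂ] ℂ) : Prop :=
  τ 1 = 1 ∧ (∀ a : D, 0 ≤ τ (star a * a)) ∧ ∀ a b : D, τ (a * b) = τ (b * a)

/-- A central projection of a *-subalgebra `B`: a projection belonging to `B` and
commuting with every element of `B`. -/
def IsCentralProjection (B : StarSubalgebra ℂ D) (p : D) : Prop :=
  p ∈ B ∧ IsSelfAdjoint p ∧ p * p = p ∧ ∀ b ∈ B, b * p = p * b

/-- A minimal central projection of `B`: a nonzero central projection dominating no
nonzero central projection of `B` other than itself. -/
def IsMinimalCentralProjection (B : StarSubalgebra ℂ D) (p : D) : Prop :=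
  IsCentralProjection B p ∧ p ≠ 0 ∧
    ∀ q, IsCentralProjection B q → q * p = q → q = 0 ∨ q = p

open Polynomial

section RegularTrace

variable (K A : Type*) [Field K] [Ring A] [Algebra K A]

noncomputable def regularTrace : A →ₗ[K] K :=
  LinearMap.trace K A ∘ₗ (Algebra.lmul K A).toLinearMap

variable {K A}

lemma regularTrace_apply (a : A) :
    regularTrace K A a = LinearMap.trace K A (Algebra.lmul K A a) := rfl

lemma regularTrace_mul_comm (a b : A) : regularTrace K A (a * b) = regularTrace K A (b * a) := by
  simp only [regularTrace_apply, map_mul, LinearMap.trace_mul_comm]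

end RegularTrace

lemma mem_spectrum_of_hasEigenvalue_lmul {R S A : Type*} [CommRing R] [Ring S] [Ring A]
    [Algebra R S] [Algebra R A] {f : S →ₐ[R] A} (hf : Function.Injective f) {a : S} {μ : R}
    (h : (Algebra.lmul R S a).HasEigenvalue μ) : μ ∈ spectrum R (f a) := by
  obtain ⟨v, hv⟩ := h.exists_hasEigenvector
  have hav : f a * f v = μ • f v := by
    rw [← map_mul, ← map_smul, ← hv.apply_eq_smul]; rfl
  refine spectrum.mem_iff.mpr fun hunit => hv.2 (hf ?_)
  rw [map_zero, ← hunit.mul_right_eq_zero, sub_mul, hav, Algebra.algebraMap_eq_smul_one,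
    smul_one_mul, sub_self]

lemma Module.End.isNilpotent_of_eigenvalues_nonneg_of_trace_eq_zero {V : Type*} [AddCommGroup V]
    [Module ℂ V] [FiniteDimensional ℂ V] {f : Module.End ℂ V} (hf : ∀ μ, f.HasEigenvalue μ → 0 ≤ μ)
    (htr : LinearMap.trace ℂ V f = 0) : IsNilpotent f := by
  have hsplit := IsAlgClosed.splits f.charpoly
  have hroots : ∀ μ ∈ f.charpoly.roots, μ = 0 := by
    refine Multiset.all_zero_of_le_zero_le_of_sum_eq_zero (fun μ hμ => hf μ ?_) ?_
    · exact (Module.End.hasEigenvalue_iff_isRoot_charpoly f μ).mpr (isRoot_of_mem_roots hμ)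
    · rwa [← Module.End.trace_eq_sum_roots_charpoly_of_splits hsplit]
  have hX : f.charpoly = X ^ Multiset.card f.charpoly.roots := by
    conv_lhs => rw [hsplit.eq_prod_roots_of_monic f.charpoly_monic,
      Multiset.eq_replicate_card.mpr hroots]
    rw [Multiset.map_replicate, Multiset.prod_replicate, map_zero, sub_zero]
  have hcayley := f.aeval_self_charpoly
  rw [hX, map_pow, aeval_X] at hcayley
  exact ⟨_, hcayley⟩

lemma Subalgebra.star_mem_center {R A : Type*} [CommSemiring R] [Semiring A] [StarRing A]
    [Algebra R A] {c : A} (hc : c ∈ Subalgebra.center R A) : star c ∈ Subalgebra.center R A := by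
  rw [Subalgebra.mem_center_iff] at *
  intro b
  simpa using congrArg star (hc (star b)).symm

lemma IsIdempotentElem.range_mulLeft_lt {R A : Type*} [CommSemiring R] [Semiring A] [Algebra R A]
    {q e : A} (hq : IsIdempotentElem q) (hqe : q * e = q) (heq : e * q = q) (hne : q ≠ e) :
    LinearMap.range (LinearMap.mulLeft R q) < LinearMap.range (LinearMap.mulLeft R e) := by
  refine lt_of_le_of_ne ?_ fun h => hne ?_
  · rintro _ ⟨b, rfl⟩
    exact ⟨q * b, by simp [← mul_assoc, heq]⟩
  · obtain ⟨b, hb⟩ : e ∈ LinearMap.range (LinearMap.mulLeft R q) := h ▸ ⟨1, mul_one e⟩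
    rw [LinearMap.mulLeft_apply] at hb
    rw [← hqe, ← hb, ← mul_assoc, hq.eq]

lemma IsIntegral.finite_spectrum {K A : Type*} [Field K] [Ring A] [Algebra K A] {a : A}
    (ha : IsIntegral K a) : (spectrum K a).Finite := by
  classical
  refine (minpoly K a).roots.toFinset.finite_toSet.subset fun r hr => ?_
  rcases subsingleton_or_nontrivial A with hA | hA
  · simp [spectrum.of_subsingleton] at hr
  have hroot := spectrum.subset_polynomial_aeval a (minpoly K a) ⟨r, hr, rfl⟩
  rw [minpoly.aeval, spectrum.zero_eq, Set.mem_singleton_iff] at hroot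
  simpa [minpoly.ne_zero ha] using hroot

lemma IsSelfAdjoint.eq_zero_of_isNilpotent {E : Type*} [NormedRing E] [StarRing E] [CStarRing E]
    {a : E} (ha : IsSelfAdjoint a) (hn : IsNilpotent a) : a = 0 := by
  obtain ⟨n, hn⟩ := hn
  have hpow : a ^ 2 ^ n = 0 := pow_eq_zero_of_le Nat.lt_two_pow_self.le hn
  have hnorm := ha.nnnorm_pow_two_pow n
  rw [hpow, nnnorm_zero, eq_comm, pow_eq_zero_iff (by positivity)] at hnorm
  exact nnnorm_eq_zero.mp hnorm

namespace StarSubalgebra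

variable {B : StarSubalgebra ℂ D} [FiniteDimensional ℂ B]

lemma eq_zero_of_regularTrace_mul_star_self {c : B} (h : regularTrace ℂ B (c * star c) = 0) :
    c = 0 := by
  -- `D` has no global order; the spectral order is the one in which `c c⋆ ≥ 0`.
  let _ := CStarAlgebra.spectralOrder D
  let _ := CStarAlgebra.spectralOrderedRing D
  have hnil : IsNilpotent (Algebra.lmul ℂ B (c * star c)) := by
    refine Module.End.isNilpotent_of_eigenvalues_nonneg_of_trace_eq_zero (fun μ hμ => ?_) h
    exact spectrum_nonneg_of_nonneg (mul_star_self_nonneg (c : D))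
      (mem_spectrum_of_hasEigenvalue_lmul (f := B.subtype.toAlgHom) Subtype.val_injective hμ)
  have hcc : (c : D) * star (c : D) = 0 :=
    (IsSelfAdjoint.mul_star_self (c : D)).eq_zero_of_isNilpotent
      (((IsNilpotent.map_iff Algebra.lmul_injective).mp hnil).map B.subtype)
  exact Subtype.ext ((CStarRing.mul_star_self_eq_zero_iff _).mp hcc)

lemma exists_regularTrace_mul_eq (ψ : Module.Dual ℂ B) :
    ∃ c : B, ∀ b, ψ b = regularTrace ℂ B (c * b) := by
  let T : B →ₗ[ℂ] Module.Dual ℂ B := (LinearMap.mul ℂ B).compr₂ (regularTrace ℂ B)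
  have hT : Function.Injective T := (injective_iff_map_eq_zero T).mpr fun c hc =>
    eq_zero_of_regularTrace_mul_star_self (LinearMap.congr_fun hc (star c))
  obtain ⟨c, hc⟩ := (LinearMap.injective_iff_surjective_of_finrank_eq_finrank
    Subspace.dual_finrank_eq.symm).mp hT ψ
  exact ⟨c, fun b => (LinearMap.congr_fun hc b).symm⟩

lemma eq_zero_of_tracial_of_vanishes_on_center (ψ : Module.Dual ℂ B)
    (htr : ∀ a b, ψ (a * b) = ψ (b * a)) (hz : ∀ z ∈ Subalgebra.center ℂ B, ψ z = 0) : ψ = 0 := by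
  obtain ⟨c, hc⟩ := exists_regularTrace_mul_eq ψ
  have hcomm : ∀ a b, regularTrace ℂ B ((c * a - a * c) * b) = 0 := fun a b => by
    rw [sub_mul, map_sub, mul_assoc, mul_assoc, regularTrace_mul_comm a, mul_assoc, ← hc, ← hc,
      htr, sub_self]
  have hcentral : c ∈ Subalgebra.center ℂ B := Subalgebra.mem_center_iff.mpr fun a =>
    (sub_eq_zero.mp (eq_zero_of_regularTrace_mul_star_self (hcomm a _))).symm
  have hc0 : c = 0 := eq_zero_of_regularTrace_mul_star_self <| by
    rw [← hc, hz _ (Subalgebra.star_mem_center hcentral)]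
  ext b
  rw [hc, hc0, zero_mul, map_zero, LinearMap.zero_apply]

end StarSubalgebra

section Projections

variable {B : StarSubalgebra ℂ D}

lemma isCentralProjection_of_isIdempotentElem {e : D} (heB : e ∈ B)
    (hcomm : ∀ b ∈ B, b * e = e * b) (he : IsIdempotentElem e) : IsCentralProjection B e :=
  ⟨heB, he.isSelfAdjoint_iff_isStarNormal.mpr ⟨hcomm _ (star_mem heB)⟩, he.eq, hcomm⟩

lemma IsCentralProjection.sub {e q : D} (he : IsCentralProjection B e)
    (hq : IsCentralProjection B q) (hqe : q * e = q) : IsCentralProjection B (e - q) := by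
  have heq : e * q = q := (hq.2.2.2 e he.1).trans hqe
  refine isCentralProjection_of_isIdempotentElem (sub_mem he.1 hq.1)
    (fun b hb => by rw [mul_sub, sub_mul, he.2.2.2 b hb, hq.2.2.2 b hb]) ?_
  rw [IsIdempotentElem, mul_sub, sub_mul, sub_mul, he.2.2.1, heq, hqe, hq.2.2.1]
  abel

lemma IsCentralProjection.mem_span_minimal [FiniteDimensional ℂ B] {ι : Type*} {P : ι → D}
    (hP : ∀ q, IsMinimalCentralProjection B q → ∃ i, q = P i) {e : D}
    (he : IsCentralProjection B e) : e ∈ Submodule.span ℂ (Set.range P) := by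
  -- Splitting `e = q + (e - q)` along a proper central subprojection lowers `dim (e B)`.
  induction hn : Module.finrank ℂ (LinearMap.range (LinearMap.mulLeft ℂ (⟨e, he.1⟩ : B)))
    using Nat.strong_induction_on generalizing e with
  | _ n ih =>
  have hsmaller : ∀ q (hq : IsCentralProjection B q), q * e = q → q ≠ e →
      Module.finrank ℂ (LinearMap.range (LinearMap.mulLeft ℂ (⟨q, hq.1⟩ : B))) < n :=
    fun q hq hqe hne => hn ▸ Submodule.finrank_lt_finrank_of_lt
      (IsIdempotentElem.range_mulLeft_lt (Subtype.ext hq.2.2.1) (Subtype.ext hqe)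
        (Subtype.ext ((hq.2.2.2 e he.1).trans hqe)) (by simpa [Subtype.ext_iff] using hne))
  by_cases hmin : IsMinimalCentralProjection B e
  · obtain ⟨i, rfl⟩ := hP e hmin
    exact Submodule.subset_span ⟨i, rfl⟩
  by_cases he0 : e = 0
  · rw [he0]
    exact zero_mem _
  obtain ⟨q, hq, hqe, hq0, hne⟩ :
      ∃ q, IsCentralProjection B q ∧ q * e = q ∧ q ≠ 0 ∧ q ≠ e := by
    simpa [IsMinimalCentralProjection, he, he0] using hmin
  have hdiff := he.sub hq hqe
  have hdiffe : (e - q) * e = e - q := by rw [sub_mul, he.2.2.1, hqe]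
  rw [← sub_add_cancel e q]
  exact add_mem (ih _ (hsmaller _ hdiff hdiffe (by simpa using hq0)) hdiff rfl)
    (ih _ (hsmaller q hq hqe hne) hq rfl)

end Projections

section SpectralDecomposition

variable {A : Type*} [TopologicalSpace A] [Ring A] [StarRing A] [Algebra ℂ A]
  [ContinuousFunctionalCalculus ℂ A IsStarNormal] {z : A} [IsStarNormal z]

lemma aeval_eq_of_eqOn_spectrum {p q : ℂ[X]}
    (h : (spectrum ℂ z).EqOn (fun r => p.eval r) (fun r => q.eval r)) :
    aeval z p = aeval z q := by
  rw [← cfc_polynomial p z, ← cfc_polynomial q z]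
  exact cfc_congr h

lemma mem_span_isIdempotentElem_adjoin (hfin : (spectrum ℂ z).Finite) :
    z ∈ Submodule.span ℂ {e | IsIdempotentElem e ∧ e ∈ Algebra.adjoin ℂ {z}} := by
  classical
  set s := hfin.toFinset
  have hs : spectrum ℂ z ⊆ s := by simp [s]
  have hinj : Set.InjOn id (s : Set ℂ) := Function.injective_id.injOn
  have hnodes {p q : ℂ[X]} (h : ∀ r ∈ s, p.eval r = q.eval r) : aeval z p = aeval z q :=
    aeval_eq_of_eqOn_spectrum fun r hr => h r (hs hr)
  have hz : z = ∑ r ∈ s, r • aeval z (Lagrange.basis s id r) := by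
    calc z = aeval z (Lagrange.interpolate s id id) :=
          (aeval_X z).symm.trans (hnodes fun r hr => by
            rw [eval_X]; exact (Lagrange.eval_interpolate_at_node (v := id) id hinj hr).symm)
      _ = _ := by simp [Lagrange.interpolate_apply, map_sum, Algebra.smul_def]
  have hidem : ∀ r ∈ s, IsIdempotentElem (aeval z (Lagrange.basis s id r)) := by
    intro r hr
    rw [IsIdempotentElem, ← map_mul]
    refine hnodes fun r' hr' => ?_
    rw [eval_mul]
    by_cases hrr' : r = r'
    · have h1 := Lagrange.eval_basis_self (v := id) hinj hr
      rw [id_eq] at h1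
      rw [← hrr', h1, mul_one]
    · have h0 := Lagrange.eval_basis_of_ne (v := id) hrr' hr'
      rw [id_eq] at h0
      rw [h0, mul_zero]
  have hsum := Submodule.sum_mem
    (Submodule.span ℂ {e | IsIdempotentElem e ∧ e ∈ Algebra.adjoin ℂ {z}}) fun r hr =>
      Submodule.smul_mem _ r (Submodule.subset_span ⟨hidem r hr, aeval_mem_adjoin_singleton ℂ z⟩)
  rwa [← hz] at hsum

end SpectralDecomposition

lemma mem_span_isCentralProjection {B : StarSubalgebra ℂ D} [FiniteDimensional ℂ B] {z : D}
    (hzB : z ∈ B) (hz : ∀ b ∈ B, b * z = z * b) :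
    z ∈ Submodule.span ℂ {e | IsCentralProjection B e} := by
  have : IsStarNormal z := ⟨hz _ (star_mem hzB)⟩
  have hint : IsIntegral ℂ z := (IsIntegral.of_finite ℂ (⟨z, hzB⟩ : B)).map B.subtype
  have hadjoin : Algebra.adjoin ℂ {z} ≤ B.toSubalgebra ⊓ Subalgebra.centralizer ℂ B :=
    Algebra.adjoin_le (Set.singleton_subset_iff.mpr
      ⟨hzB, (Subalgebra.mem_centralizer_iff ℂ).mpr hz⟩)
  refine Submodule.span_mono ?_ (mem_span_isIdempotentElem_adjoin hint.finite_spectrum)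
  rintro e ⟨he, hemem⟩
  obtain ⟨heB, hec⟩ := hadjoin hemem
  exact isCentralProjection_of_isIdempotentElem heB ((Subalgebra.mem_centralizer_iff ℂ).mp hec) he

lemma mem_span_minimal_of_mem_center {B : StarSubalgebra ℂ D} [FiniteDimensional ℂ B] {ι : Type*}
    {P : ι → D} (hP : ∀ q, IsMinimalCentralProjection B q → ∃ i, q = P i) {z : D} (hzB : z ∈ B)
    (hz : ∀ b ∈ B, b * z = z * b) : z ∈ Submodule.span ℂ (Set.range P) :=
  Submodule.span_le.mpr (fun _ he => IsCentralProjection.mem_span_minimal hP he)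
    (mem_span_isCentralProjection hzB hz)

lemma trace_mul_mul_comm_of_commute {A β : Type*} [Semigroup A] {τ : A → β}
    (hτ : ∀ a b, τ (a * b) = τ (b * a)) {x a : A} (hxa : a * x = x * a) (b : A) :
    τ (x * (a * b)) = τ (x * (b * a)) := by
  rw [← mul_assoc, ← hxa, mul_assoc, hτ, mul_assoc]

theorem independent_iff_independent_of_minimal_central_projections_general
    (τ : D →ₗ[ℂ] ℂ) (hτ : IsTracialState τ)
    (B : StarSubalgebra ℂ D) (hBfd : FiniteDimensional ℂ B)
    (N : ℕ) (P : Fin N → D)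
    (hP : ∀ i, IsMinimalCentralProjection B (P i))
    (hPall : ∀ q, IsMinimalCentralProjection B q → ∃ i, q = P i)
    (x : D) (hx : ∀ b ∈ B, b * x = x * b) :
    (∀ y ∈ B, τ (x * y) = τ x * τ y) ↔ ∀ i, τ (x * P i) = τ x * τ (P i) := by
  refine ⟨fun h i => h (P i) (hP i).1.1, fun h y hy => ?_⟩
  let φ : D →ₗ[ℂ] ℂ := τ ∘ₗ LinearMap.mulLeft ℂ x - τ x • τ
  have hφ (y : D) : φ y = τ (x * y) - τ x * τ y := rfl
  have hφP : Submodule.span ℂ (Set.range P) ≤ LinearMap.ker φ := by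
    rw [Submodule.span_le]
    rintro _ ⟨i, rfl⟩
    rw [SetLike.mem_coe, LinearMap.mem_ker, hφ, h i, sub_self]
  have hψ := StarSubalgebra.eq_zero_of_tracial_of_vanishes_on_center
    (B := B) (φ ∘ₗ B.subtype.toLinearMap)
    (fun a b => by
      show φ ((a : D) * b) = φ ((b : D) * a)
      rw [hφ, hφ, trace_mul_mul_comm_of_commute hτ.2.2 (hx a a.2), hτ.2.2 (a : D)])
    (fun z hz => hφP (mem_span_minimal_of_mem_center hPall z.2 fun b hb =>
      congrArg Subtype.val (Subalgebra.mem_center_iff.mp hz ⟨b, hb⟩)))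
  simpa [hφ, sub_eq_zero] using LinearMap.congr_fun hψ ⟨y, hy⟩

/-- Lemma 2.3. -/
theorem independent_iff_independent_of_minimal_central_projections
    (τ : D →ₗ[ℂ] ℂ) (hτ : IsTracialState τ)
    (huniq : ∀ σ : D →ₗ[ℂ] ℂ, IsTracialState σ → σ = τ)
    (B : StarSubalgebra ℂ D) (hBfd : FiniteDimensional ℂ B)
    (N : ℕ) (P : Fin N → D)
    (hP : ∀ i, IsMinimalCentralProjection B (P i))
    (hPinj : Function.Injective P)
    (hPall : ∀ q, IsMinimalCentralProjection B q → ∃ i, q = P i)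
    (x : D) (hx : ∀ b ∈ B, b * x = x * b) :
    (∀ y ∈ B, τ (x * y) = τ x * τ y) ↔ ∀ i, τ (x * P i) = τ x * τ (P i) :=
  independent_iff_independent_of_minimal_central_projections_general τ hτ B hBfd N P hP hPall x hx
end

section
/- Let λ > 0 be a transcendental real number (equivalently, the powers 1, λ, λ², … are linearly independent over ℚ), and let G_λ be the additive subgroup of ℝ generated by {λ^n : n ∈ ℤ}. Then (1−λ)G_λ = {(1−λ)g : g ∈ G_λ} is a subgroup of G_λ, and the quotient group G_λ / (1−λ)G_λ is isomorphic to ℤ. -/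
/-!
Evaluation at `λ` maps the Laurent polynomials `ℤ[T, T⁻¹]` onto `G_λ`, injectively because `λ` is
transcendental, and turns multiplication by `1 - T` into multiplication by `1 - λ`. Hence
`G_λ / (1 - λ) G_λ ≃ ℤ[T, T⁻¹] / (1 - T) ≃ ℤ`, the last map being evaluation at `T = 1`: a Laurent
polynomial vanishing at `1` is, up to a power of `T`, a polynomial with root `1`, so it is
divisible by `T - 1`.
-/

noncomputable def AddMonoidHom.quotientMapAddSubgroupOfRangeEquiv {M N : Type*} [AddCommGroup M]
    [AddCommGroup N] (f : M →+ N) (hf : Function.Injective f) (K : AddSubgroup M) :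
    f.range ⧸ (K.map f).addSubgroupOf f.range ≃+ M ⧸ K :=
  (QuotientAddGroup.congr K _ (AddMonoidHom.ofInjective hf) <| by
    ext ⟨_, y, rfl⟩
    simp [AddSubgroup.mem_addSubgroupOf, hf.eq_iff, Subtype.ext_iff,
      AddMonoidHom.ofInjective_apply]).symm

namespace LaurentPolynomial

open Polynomial

variable {R : Type*} [CommRing R]

theorem eval₂_injective_of_transcendental {A : Type*} [CommRing A] [Algebra R A] {x : Aˣ}
    (hx : Transcendental R (x : A)) : Function.Injective (eval₂ (algebraMap R A) x) := by
  refine (injective_iff_map_eq_zero _).2 fun f hf => ?_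
  obtain ⟨n, p, hp⟩ := f.exists_T_pow
  have hp0 : p = 0 := transcendental_iff.1 hx p <| by
    rw [aeval_def, ← eval₂_toLaurent, hp, map_mul, hf, zero_mul]
  rwa [hp0, map_zero, eq_comm, (isUnit_T _).mul_left_eq_zero] at hp

theorem ker_eval₂_one :
    (eval₂ (RingHom.id R) 1).toAddMonoidHom.ker = (AddMonoidHom.mulLeft (1 - T 1)).range := by
  ext f
  refine ⟨fun hf => ?_, ?_⟩
  · obtain ⟨n, p, hp⟩ := f.exists_T_pow
    have hroot : p.IsRoot 1 := by
      rw [IsRoot, ← eval₂_id, ← Units.val_one, ← eval₂_toLaurent, hp, map_mul]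
      simp only [AddMonoidHom.mem_ker, RingHom.toAddMonoidHom_eq_coe, AddMonoidHom.coe_coe] at hf
      rw [hf, zero_mul]
    obtain ⟨q, rfl⟩ := dvd_iff_isRoot.2 hroot
    refine ⟨-(toLaurent q * T (-n)), ?_⟩
    calc (1 - T 1) * -(toLaurent q * T (-n))
        = toLaurent ((X - Polynomial.C 1) * q) * T (-n) := by simp; ring
      _ = f := by rw [hp, mul_T_assoc, add_neg_cancel, T_zero, mul_one]
  · rintro ⟨g, rfl⟩
    simp

noncomputable def quotientOneSubTEquiv :
    R[T;T⁻¹] ⧸ (AddMonoidHom.mulLeft (1 - T 1 : R[T;T⁻¹])).range ≃+ R :=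
  (QuotientAddGroup.quotientAddEquivOfEq ker_eval₂_one.symm).trans <|
    QuotientAddGroup.quotientKerEquivOfSurjective _ fun r => ⟨C r, eval₂_C _ _ r⟩

theorem range_eval₂_int {S : Type*} [CommRing S] (x : Sˣ) :
    (eval₂ (algebraMap ℤ S) x).toAddMonoidHom.range =
      AddSubgroup.closure (Set.range fun n : ℤ => ((x ^ n : Sˣ) : S)) := by
  apply le_antisymm
  · rintro _ ⟨f, rfl⟩
    induction f using LaurentPolynomial.induction_on' with
    | add p q hp hq => simpa using add_mem hp hq
    | C_mul_T n a =>
      have : eval₂ (algebraMap ℤ S) x (C a * T n) = a • ((x ^ n : Sˣ) : S) := by simp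
      rw [RingHom.toAddMonoidHom_eq_coe, AddMonoidHom.coe_coe, this]
      exact zsmul_mem (AddSubgroup.subset_closure (Set.mem_range_self n)) a
  · rw [AddSubgroup.closure_le]
    rintro _ ⟨n, rfl⟩
    exact ⟨T n, eval₂_T _ _ n⟩

end LaurentPolynomial

open LaurentPolynomial

theorem quotient_iso_int_of_transcendental
    (l : ℝ) (hl : 0 < l) (htr : Transcendental ℚ l)
    (G : AddSubgroup ℝ)
    (hG : G = AddSubgroup.closure (Set.range fun n : ℤ => l ^ n))
    (H : AddSubgroup ℝ)
    (hH : H = AddSubgroup.map (AddMonoidHom.mulLeft (1 - l)) G) :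
    H ≤ G ∧ Nonempty ((G ⧸ H.addSubgroupOf G) ≃+ ℤ) := by
  let x := Units.mk0 l hl.ne'
  let ev := (eval₂ (algebraMap ℤ ℝ) x).toAddMonoidHom
  have hG' : G = ev.range := by
    rw [hG, range_eval₂_int]
    simp [x, Units.val_zpow_eq_zpow_val]
  have hH' : H = (AddMonoidHom.mulLeft (1 - T 1 : ℤ[T;T⁻¹])).range.map ev := by
    rw [hH, hG', AddMonoidHom.map_range, AddMonoidHom.map_range]
    congr 1
    ext f
    simp [ev, x]
  have hinj : Function.Injective ev :=
    eval₂_injective_of_transcendental (htr.restrictScalars (algebraMap ℤ ℚ).injective_int)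
  subst hG' hH'
  exact ⟨AddSubgroup.map_le_range _ _,
    ⟨(ev.quotientMapAddSubgroupOfRangeEquiv hinj _).trans quotientOneSubTEquiv⟩⟩
end

section
/- Let λ > 0 with λ ≠ 1 be an algebraic real number, and suppose the ideal {f ∈ ℤ[t] : f(λ) = 0} of the polynomial ring ℤ[t] is generated by a polynomial p(t) ∈ ℤ[t]. Let G_λ be the additive subgroup of ℝ generated by {λ^n : n ∈ ℤ}. Then the quotient group G_λ / (1−λ)G_λ is isomorphic to ℤ/p(1)ℤ. -/
/-!
Evaluation at `λ` maps the Laurent polynomial ring `ℤ[T, T⁻¹]` onto `G_λ`, and evaluation at `1`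
maps it onto `ℤ`; both quotients in question are therefore quotients of `ℤ[T, T⁻¹]`, and it
suffices to show `f(λ) ∈ (1 - λ)G_λ ↔ p(1) ∣ f(1)`. If `f(λ) = (1 - λ)g(λ)`, then some
`T^n (f - (1 - T)g)` is an honest polynomial vanishing at `λ`, hence a multiple of `p`, and
evaluating at `1` gives `p(1) ∣ f(1)`. Conversely, every Laurent polynomial is congruent to its
value at `1` modulo `1 - T`; applied to `f` and to `p`, together with `p(λ) = 0`, this writes
`f(λ)` as `(1 - λ)` times a value at `λ` once `p(1) ∣ f(1)`.
-/

open scoped Polynomial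

noncomputable def AddEquiv.ofSurjectiveOfKerEq {A B C : Type*} [AddGroup A] [AddGroup B]
    [AddGroup C] (φ : A →+ B) (ψ : A →+ C) (hφ : Function.Surjective φ)
    (hψ : Function.Surjective ψ) (h : φ.ker = ψ.ker) : B ≃+ C :=
  (QuotientAddGroup.quotientKerEquivOfSurjective φ hφ).symm.trans <|
    (QuotientAddGroup.quotientAddEquivOfEq h).trans <|
      QuotientAddGroup.quotientKerEquivOfSurjective ψ hψ

namespace LaurentPolynomial

variable {R S : Type*} [CommRing R] [CommRing S]

theorem one_sub_T_one_dvd_T_sub_one (n : ℤ) : (1 - T 1 : R[T;T⁻¹]) ∣ T n - 1 := by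
  have hT : (T (-1) * T 1 : R[T;T⁻¹]) = 1 := by rw [← T_add]; simp [T_zero]
  induction n using Int.induction_on with
  | zero => simp [T_zero]
  | succ n ih =>
    obtain ⟨g, hg⟩ := ih
    exact ⟨T 1 * g - 1, by rw [T_add]; linear_combination T 1 * hg⟩
  | pred n ih =>
    obtain ⟨g, hg⟩ := ih
    exact ⟨T (-1) * (g + 1), by rw [T_sub]; linear_combination T (-1) * hg + hT⟩

theorem one_sub_T_one_dvd_sub_C_eval₂_one (f : R[T;T⁻¹]) :
    (1 - T 1 : R[T;T⁻¹]) ∣ f - C (eval₂ (RingHom.id R) 1 f) := by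
  induction f using LaurentPolynomial.induction_on' with
  | add f g hf hg =>
    rw [map_add, map_add, add_sub_add_comm]
    exact dvd_add hf hg
  | C_mul_T n a =>
    simpa [mul_sub] using dvd_mul_of_dvd_right (one_sub_T_one_dvd_T_sub_one n) (C a)

theorem closure_range_zpow_eq_range_eval₂ (x : Sˣ) :
    AddSubgroup.closure (Set.range fun n : ℤ => ((x ^ n : Sˣ) : S)) =
      (eval₂ (algebraMap ℤ S) x).toAddMonoidHom.range := by
  apply le_antisymm
  · rw [AddSubgroup.closure_le]
    rintro _ ⟨n, rfl⟩
    exact AddMonoidHom.mem_range.2 ⟨T n, by simp⟩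
  · rintro _ ⟨f, rfl⟩
    induction f using LaurentPolynomial.induction_on' with
    | add f g hf hg => simpa using add_mem hf hg
    | C_mul_T n a =>
      simpa [← zsmul_eq_mul] using
        AddSubgroup.zsmul_mem _ (AddSubgroup.subset_closure (Set.mem_range_self n)) a

variable [Algebra R S] {x : Sˣ} {p : R[X]}

theorem dvd_eval₂_one_of_eval₂_eq_zero
    (hp : ∀ q : R[X], Polynomial.aeval (x : S) q = 0 → p ∣ q)
    {f : R[T;T⁻¹]} (hf : eval₂ (algebraMap R S) x f = 0) :
    p.eval 1 ∣ eval₂ (RingHom.id R) 1 f := by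
  obtain ⟨n, q, hq⟩ := exists_T_pow f
  have hq0 : Polynomial.aeval (x : S) q = 0 := by
    rw [Polynomial.aeval_def, ← eval₂_toLaurent, hq, map_mul, hf, zero_mul]
  obtain ⟨r, rfl⟩ := hp q hq0
  refine ⟨r.eval 1, ?_⟩
  simpa [Polynomial.eval₂_id] using (congrArg (eval₂ (RingHom.id R) 1) hq).symm

theorem exists_one_sub_mul_eval₂_iff
    (hp : ∀ q : R[X], Polynomial.aeval (x : S) q = 0 ↔ p ∣ q) (f : R[T;T⁻¹]) :
    (∃ g, (1 - x) * eval₂ (algebraMap R S) x g = eval₂ (algebraMap R S) x f) ↔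
      p.eval 1 ∣ eval₂ (RingHom.id R) 1 f := by
  constructor
  · rintro ⟨g, hg⟩
    have hdvd := dvd_eval₂_one_of_eval₂_eq_zero (fun q => (hp q).1) (f := f - (1 - T 1) * g)
      (by simp [hg])
    simpa using hdvd
  · rintro ⟨k, hk⟩
    obtain ⟨g, hg⟩ := one_sub_T_one_dvd_sub_C_eval₂_one f
    obtain ⟨h, hh⟩ := one_sub_T_one_dvd_sub_C_eval₂_one (Polynomial.toLaurent p)
    rw [hk] at hg
    simp only [eval₂_toLaurent, Polynomial.eval₂_id, Units.val_one] at hh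
    have hf : f = (1 - T 1) * (g - C k * h) + C k * Polynomial.toLaurent p := by
      linear_combination hg - C k * hh + map_mul C (p.eval 1) k
    have hp0 : eval₂ (algebraMap R S) x (Polynomial.toLaurent p) = 0 := by
      rw [eval₂_toLaurent, ← Polynomial.aeval_def, hp]
    refine ⟨g - C k * h, ?_⟩
    rw [hf, map_add, map_mul, map_mul, hp0]
    simp

end LaurentPolynomial

open LaurentPolynomial in
theorem quotient_iso_zmod_of_algebraic_general
    (l : ℝ) (hl : 0 < l)
    (p : Polynomial ℤ)
    (hp : ∀ f : Polynomial ℤ, Polynomial.aeval l f = 0 ↔ p ∣ f)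
    (G : AddSubgroup ℝ)
    (hG : G = AddSubgroup.closure (Set.range fun n : ℤ => l ^ n))
    (H : AddSubgroup ℝ)
    (hH : H = AddSubgroup.map (AddMonoidHom.mulLeft (1 - l)) G) :
    Nonempty ((G ⧸ H.addSubgroupOf G) ≃+
      (ℤ ⧸ AddSubgroup.zmultiples (Polynomial.eval 1 p))) := by
  set x : ℝˣ := Units.mk0 l hl.ne'
  set e := (eval₂ (algebraMap ℤ ℝ) x).toAddMonoidHom
  have hGe : G = e.range := by
    rw [hG, ← closure_range_zpow_eq_range_eval₂]
    simp [x]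
  subst hGe hH
  refine ⟨AddEquiv.ofSurjectiveOfKerEq ((QuotientAddGroup.mk' _).comp e.rangeRestrict)
    ((QuotientAddGroup.mk' _).comp (eval₂ (RingHom.id ℤ) 1).toAddMonoidHom) ?_ ?_ ?_⟩
  · exact (QuotientAddGroup.mk'_surjective _).comp e.rangeRestrict_surjective
  · exact (QuotientAddGroup.mk'_surjective _).comp fun k => ⟨C k, by simp⟩
  · ext f
    simp only [AddMonoidHom.mem_ker, AddMonoidHom.coe_comp, QuotientAddGroup.coe_mk',
      Function.comp_apply, QuotientAddGroup.eq_zero_iff, AddSubgroup.mem_addSubgroupOf,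
      AddMonoidHom.coe_rangeRestrict, AddSubgroup.mem_map, AddMonoidHom.mem_range,
      AddMonoidHom.coe_mulLeft, exists_exists_eq_and, RingHom.toAddMonoidHom_eq_coe,
      AddMonoidHom.coe_coe, Int.mem_zmultiples_iff]
    exact exists_one_sub_mul_eval₂_iff (x := x) hp f

theorem quotient_iso_zmod_of_algebraic
    (l : ℝ) (hl : 0 < l) (hl1 : l ≠ 1) (halg : IsAlgebraic ℚ l)
    (p : Polynomial ℤ)
    (hp : ∀ f : Polynomial ℤ, Polynomial.aeval l f = 0 ↔ p ∣ f)
    (G : AddSubgroup ℝ)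
    (hG : G = AddSubgroup.closure (Set.range fun n : ℤ => l ^ n))
    (H : AddSubgroup ℝ)
    (hH : H = AddSubgroup.map (AddMonoidHom.mulLeft (1 - l)) G) :
    Nonempty ((G ⧸ H.addSubgroupOf G) ≃+
      (ℤ ⧸ AddSubgroup.zmultiples (Polynomial.eval 1 p))) :=
  quotient_iso_zmod_of_algebraic_general l hl p hp G hG H hH
end
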